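/- The first column of the Catalan triangle satisfies the Catalan recurrence: C(n+1,1) = Σ_{k=1}^{n} C(k,1)·C(n+1-k,1) for all n ≥ 1, where C(i,j) are defined by the Catalan triangle recursion. -/

import Mathlib

/-!
In the coordinates `i = a + 1`, `j = a + 1 - d` the triangle recursion becomes Pascal's rule
`f (a + 1) (d + 1) = f a (d + 1) + f (a + 1) d` on the strip `d ≤ a + 1`, with `f a 0 = 1` and
`f a (a + 1) = 0`. Its solution is the ballot number `(a + d).choose a - (a + d).choose (a + 1)`,
which on the first column `d = a` is `(2a).choose a - (2a).choose (a + 1) = catalan a`. Segner's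
recurrence is then `catalan_succ`.
-/

open Finset

theorem sum_Icc_one_eq_sum_range {M : Type*} [AddCommMonoid M] (f : ℕ → M) (n : ℕ) :
    ∑ k ∈ Icc 1 n, f k = ∑ k ∈ range n, f (k + 1) := by
  rw [range_eq_Ico, sum_Ico_add', zero_add, Ico_add_one_right_eq_Icc]

def ballot (a d : ℕ) : ℤ := (a + d).choose a - (a + d).choose (a + 1)

@[simp]
theorem ballot_zero_right (a : ℕ) : ballot a 0 = 1 := by
  simp [ballot]

@[simp]
theorem ballot_succ_self (a : ℕ) : ballot a (a + 1) = 0 := by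
  rw [ballot, show a + (a + 1) = 2 * a + 1 by ring, Nat.choose_symm_half, sub_self]

theorem ballot_succ_succ (a d : ℕ) :
    ballot (a + 1) (d + 1) = ballot a (d + 1) + ballot (a + 1) d := by
  simp only [ballot, show a + 1 + (d + 1) = (a + d + 1) + 1 by ring, Nat.choose_succ_succ',
    show a + (d + 1) = a + d + 1 by ring, show a + 1 + d = a + d + 1 by ring]
  push_cast
  ring

theorem ballot_self (a : ℕ) : ballot a a = catalan a := by
  have hcat : ((a : ℤ) + 1) * catalan a = (a + a).choose a := by
    rw [← two_mul, ← Nat.centralBinom_eq_two_mul_choose, ← succ_mul_catalan_eq_centralBinom]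
    push_cast; ring
  have hchoose : ((a + a).choose (a + 1) : ℤ) * (a + 1) = (a + a).choose a * a := by
    have h := Nat.choose_succ_right_eq (a + a) a
    rw [Nat.add_sub_cancel] at h
    exact_mod_cast h
  have key : ((a : ℤ) + 1) * ballot a a = ((a : ℤ) + 1) * catalan a := by
    rw [ballot]
    linear_combination -hcat - hchoose
  exact mul_left_cancel₀ (by positivity) key

theorem catalanTriangle_eq_ballot {R : Type*} [AddGroupWithOne R] (C : ℕ → ℕ → R) (h11 : C 1 1 = 1) (h0 : ∀ i, C i 0 = 0)
    (hsup : ∀ i, C i (i + 1) = 0)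
    (hrec : ∀ i j, 1 ≤ j → j ≤ i → (i, j) ≠ (1, 1) → C i j = C (i - 1) (j - 1) + C i (j + 1)) :
    ∀ a d, d ≤ a + 1 → C (a + 1) (a + 1 - d) = ballot a d := by
  intro a
  induction a with
  | zero =>
    intro d hd
    interval_cases d
    · simpa using h11
    · simpa using h0 1
  | succ a iha =>
    intro d
    induction d with
    | zero =>
      intro _
      have hdiag := iha 0 (by omega)
      rw [Nat.sub_zero] at hdiag ⊢
      rw [hrec (a + 1 + 1) _ (by omega) le_rfl (by simp), hsup, Nat.add_sub_cancel, hdiag]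
      simp
    | succ d ihd =>
      intro hd
      rcases hd.eq_or_lt with hd | hd
      · rw [Nat.add_right_cancel hd, Nat.sub_self, h0, ballot_succ_self, Int.cast_zero]
      · rw [hrec _ _ (by omega) (by omega) (by simp), ballot_succ_succ]
        push_cast
        rw [← iha (d + 1) (by omega), ← ihd (by omega)]
        congr 2
        omega

/-- The first column of the Catalan triangle satisfies Segner's recurrence:
C(n+1,1) = Σ_{k=1}^n C(k,1)·C(n+1-k,1) for n ≥ 1. -/
theorem catalan_triangle_segner (C : ℕ → ℕ → ℝ)
    (h11 : C 1 1 = 1)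
    (h0 : ∀ i, C i 0 = 0)
    (hgt : ∀ i j, i < j → C i j = 0)
    (hrec : ∀ i j, 1 ≤ j → j ≤ i → (i, j) ≠ (1, 1) →
      C i j = C (i - 1) (j - 1) + C i (j + 1)) :
    ∀ n, 1 ≤ n → C (n + 1) 1 = ∑ k ∈ Finset.Icc 1 n, C k 1 * C (n + 1 - k) 1 := by
  have hcol (k : ℕ) : C (k + 1) 1 = catalan k := by
    have h := catalanTriangle_eq_ballot C h11 h0 (fun i ↦ hgt i (i + 1) (lt_add_one i)) hrec k k
      (Nat.le_succ k)
    rwa [Nat.add_sub_cancel_left, ballot_self, Int.cast_natCast] at h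
  intro n hn
  obtain ⟨m, rfl⟩ : ∃ m, n = m + 1 := ⟨n - 1, by omega⟩
  rw [hcol, catalan_succ, sum_Icc_one_eq_sum_range, ← Fin.sum_univ_eq_sum_range, Nat.cast_sum]
  refine sum_congr rfl fun k _ ↦ ?_
  rw [show m + 1 + 1 - (k + 1) = m - k + 1 by omega, hcol, hcol, Nat.cast_mul]
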